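/- The conditional expectation of the partial score with respect to the overdispersion parameter k, excluding the digamma terms, reduces to (1−π)·log p̃: for all real numbers λ > 0, k > 0, π ∈ (0,1) and all real numbers c, d, setting p = k/(k+λ) and q = π + (1−π)p^k, one has f(0)·(1/q)·( c + (1−π)·p^k·((k/p)·d + log p) − p^k·c ) + ∑_{m=1}^∞ f(m)·( −c/(1−π) + (k/p)·d + log p − (m/(1−p))·d ) = (1−π)·log p. -/

import Mathlib

/-!
On `m ≥ 1` the ZINB pmf is `(1 - π)` times the negative binomial pmf `g`, whose coefficients
`Γ(m + k) / (m! Γ(k))` are the multichoose numbers of the binomial series of `(1 - x)^(-k)`.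
Evaluating that series at `x = 1 - p` for shapes `k` and `k + 1` gives `∑_{m ≥ 1} g m = 1 - p^k`
and `∑_{m ≥ 1} m g m = k (1 - p) / p`. Substituting these two sums, the `c`-terms and the
`d`-terms cancel and only `(1 - π) log p` is left.
-/

/-- The negative binomial pmf with real shape `k` (and `p = k/(k+λ)`). -/
noncomputable def nbPmf (lam k : ℝ) (m : ℕ) : ℝ :=
  Real.Gamma ((m : ℝ) + k) / ((m.factorial : ℝ) * Real.Gamma k) *
    (lam / (k + lam)) ^ m * (k / (k + lam)) ^ k

/-- The zero-inflated negative binomial (ZINB) pmf on ℕ. -/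
noncomputable def zinbPmf (lam k pi : ℝ) (m : ℕ) : ℝ :=
  (if m = 0 then pi else 0) + (1 - pi) * nbPmf lam k m

open Polynomial

namespace Real

theorem Gamma_nat_add_div_Gamma_eq {k : ℝ} (hk : ∀ n : ℕ, k ≠ -n) (m : ℕ) :
    Gamma (m + k) / Gamma k = (ascPochhammer ℝ m).eval k := by
  induction m with
  | zero => simp [Gamma_ne_zero hk]
  | succ m ih =>
    have hmk : (m : ℝ) + k ≠ 0 := fun h => hk m (by linarith)
    rw [ascPochhammer_succ_right, eval_mul, ← ih, Nat.cast_succ, add_right_comm,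
      Gamma_add_one hmk]
    simp only [eval_add, eval_X, eval_natCast]
    ring

theorem Gamma_nat_add_div_eq_multichoose {k : ℝ} (hk : ∀ n : ℕ, k ≠ -n) (m : ℕ) :
    Gamma (m + k) / (m.factorial * Gamma k) = Ring.multichoose k m := by
  have h := Ring.factorial_nsmul_multichoose_eq_ascPochhammer k m
  rw [nsmul_eq_mul, ascPochhammer_smeval_eq_eval, ← Gamma_nat_add_div_Gamma_eq hk] at h
  rw [mul_comm, ← div_div, ← h, mul_div_cancel_left₀ _ (by positivity)]

theorem hasSum_multichoose_mul_pow (a : ℝ) {x : ℝ} (hx : |x| < 1) :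
    HasSum (fun n : ℕ => Ring.multichoose a n * x ^ n) ((1 - x) ^ a)⁻¹ := by
  have h := (one_div_one_sub_rpow_hasFPowerSeriesOnBall_zero a).hasSum (y := x)
    (by simpa [enorm_eq_nnnorm, ← NNReal.coe_lt_coe] using hx)
  simpa [FormalMultilinearSeries.ofScalars_apply_eq, Ring.multichoose_eq, mul_comm] using h

end Real

noncomputable def negBinomialWeight (k p : ℝ) (m : ℕ) : ℝ :=
  Real.Gamma (m + k) / (m.factorial * Real.Gamma k) * (1 - p) ^ m * p ^ k

section NegBinomial

variable {k p : ℝ}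

theorem negBinomialWeight_zero (hk : ∀ n : ℕ, k ≠ -n) : negBinomialWeight k p 0 = p ^ k := by
  simp [negBinomialWeight, Real.Gamma_ne_zero hk]

theorem hasSum_negBinomialWeight (hk : ∀ n : ℕ, k ≠ -n) (hp₀ : 0 < p) (hp₂ : p < 2) :
    HasSum (negBinomialWeight k p) 1 := by
  have hx : |1 - p| < 1 := abs_lt.mpr ⟨by linarith, by linarith⟩
  have h := (Real.hasSum_multichoose_mul_pow k hx).mul_right (p ^ k)
  rw [sub_sub_cancel, inv_mul_cancel₀ (Real.rpow_pos_of_pos hp₀ k).ne'] at h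
  refine (funext fun m => ?_ : negBinomialWeight k p = _) ▸ h
  rw [negBinomialWeight, Real.Gamma_nat_add_div_eq_multichoose hk]

theorem succ_mul_negBinomialWeight_succ (hk : k ≠ 0) (hp₀ : 0 < p) (m : ℕ) :
    (m + 1) * negBinomialWeight k p (m + 1) = k * (1 - p) / p * negBinomialWeight (k + 1) p m := by
  have hΓ : Real.Gamma ((m + 1 : ℕ) + k) = Real.Gamma (m + (k + 1)) := by push_cast; ring_nf
  simp only [negBinomialWeight, hΓ, Real.Gamma_add_one hk, Nat.factorial_succ,
    Real.rpow_add hp₀, Real.rpow_one, pow_succ]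
  push_cast
  field_simp

theorem hasSum_natCast_mul_negBinomialWeight (hk : ∀ n : ℕ, k ≠ -n) (hp₀ : 0 < p)
    (hp₂ : p < 2) :
    HasSum (fun m : ℕ => m * negBinomialWeight k p m) (k * (1 - p) / p) := by
  have hk₁ : ∀ n : ℕ, k + 1 ≠ -n := fun n h => hk (n + 1) (by push_cast; linarith)
  have h := (hasSum_negBinomialWeight hk₁ hp₀ hp₂).mul_left (k * (1 - p) / p)
  rw [mul_one] at h
  refine (hasSum_nat_add_iff' 1).mp ?_
  simpa [succ_mul_negBinomialWeight_succ (by simpa using hk 0) hp₀] using h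

end NegBinomial

theorem nbPmf_eq_negBinomialWeight {lam k : ℝ} (h : k + lam ≠ 0) :
    nbPmf lam k = negBinomialWeight k (k / (k + lam)) := by
  funext m
  rw [nbPmf, negBinomialWeight, one_sub_div h, add_sub_cancel_left]

theorem zinbPmf_zero (lam k pi : ℝ) : zinbPmf lam k pi 0 = pi + (1 - pi) * nbPmf lam k 0 := by
  simp [zinbPmf]

theorem zinbPmf_succ (lam k pi : ℝ) (m : ℕ) :
    zinbPmf lam k pi (m + 1) = (1 - pi) * nbPmf lam k (m + 1) := by
  simp [zinbPmf]

/-- The conditional expectation of the partial score with respect to the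
overdispersion parameter `k`, excluding the digamma terms, reduces to
`(1−π)·log p`: here `c` and `d` play the roles of the derivatives `∂π/∂k`
and `∂p/∂k`, and the sum over `m ≥ 1` is written as a sum over `m : ℕ`
evaluated at `m + 1`. -/
theorem zinb_score_overdispersion_mean
    (lam k pi : ℝ) (hlam : 0 < lam) (hk : 0 < k) (hpi : pi ∈ Set.Ioo (0 : ℝ) 1)
    (c d : ℝ)
    (p q : ℝ) (hp : p = k / (k + lam)) (hq : q = pi + (1 - pi) * p ^ k) :
    zinbPmf lam k pi 0 * (1 / q) *
        (c + (1 - pi) * p ^ k * ((k / p) * d + Real.log p) - p ^ k * c) +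
      (∑' m : ℕ, zinbPmf lam k pi (m + 1) *
        (-c / (1 - pi) + (k / p) * d + Real.log p -
          (((m : ℕ) + 1 : ℝ) / (1 - p)) * d))
      = (1 - pi) * Real.log p := by
  obtain ⟨hpi₀, hpi₁⟩ := hpi
  have hk_ne : ∀ n : ℕ, k ≠ -n := fun n h => by linarith [n.cast_nonneg (α := ℝ)]
  have hp₀ : 0 < p := hp ▸ by positivity
  have hp₁ : p < 1 := hp ▸ (div_lt_one (by positivity)).mpr (by linarith)
  have hnb : nbPmf lam k = negBinomialWeight k p :=
    hp ▸ nbPmf_eq_negBinomialWeight (by positivity)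
  have hq₀ : 0 < q := hq ▸ by positivity
  have hmass := (hasSum_nat_add_iff' 1).mpr (hasSum_negBinomialWeight hk_ne hp₀ (by linarith))
  have hmean := (hasSum_nat_add_iff' 1).mpr
    (hasSum_natCast_mul_negBinomialWeight hk_ne hp₀ (by linarith))
  simp only [Finset.sum_range_one, negBinomialWeight_zero hk_ne, Nat.cast_zero, zero_mul,
    sub_zero, Nat.cast_add, Nat.cast_one] at hmass hmean
  have htail := (hmass.mul_left ((1 - pi) * (-c / (1 - pi) + (k / p) * d + Real.log p))).sub
    (hmean.mul_left ((1 - pi) * (d / (1 - p))))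
  rw [zinbPmf_zero, hnb, negBinomialWeight_zero hk_ne, ← hq,
    (tsum_congr fun m => by rw [zinbPmf_succ, hnb]; ring).trans htail.tsum_eq]
  have : 1 - p ≠ 0 := by linarith
  have : 1 - pi ≠ 0 := by linarith
  field_simp
  ring
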